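/- For every even n with n ≥ 6, the Weyl group W(Bₙ) = V ⋊ Sₙ cannot be expressed as a direct product of two nontrivial groups: there do not exist groups H₁ and H₂, each having more than one element, with W(Bₙ) isomorphic to H₁ × H₂. -/

import Mathlib

open Multiplicative

abbrev Vn (n : ℕ) := Multiplicative (Fin n → ZMod 2)

def permAut (n : ℕ) : Equiv.Perm (Fin n) →* MulAut (Vn n) where
  toFun σ :=
    { toFun := fun v => ofAdd fun i => toAdd v (σ⁻¹ i)
      invFun := fun v => ofAdd fun i => toAdd v (σ i)
      left_inv := fun v => by simp
      right_inv := fun v => by simp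
      map_mul' := fun v w => rfl }
  map_one' := rfl
  map_mul' := fun σ τ => rfl

@[simp] lemma permAut_apply (n : ℕ) (σ : Equiv.Perm (Fin n)) (v : Vn n) (i : Fin n) :
    toAdd (permAut n σ v) i = toAdd v (σ⁻¹ i) := rfl

def Ve (n : ℕ) : Subgroup (Vn n) where
  carrier := {v | ∑ i, toAdd v i = 0}
  one_mem' := by simp
  mul_mem' := by
    intro a b ha hb
    simp only [Set.mem_setOf_eq, toAdd_mul, Pi.add_apply, Finset.sum_add_distrib] at *
    rw [ha, hb, add_zero]
  inv_mem' := by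
    intro a ha
    simp only [Set.mem_setOf_eq, toAdd_inv, Pi.neg_apply, Finset.sum_neg_distrib] at *
    rw [ha, neg_zero]

lemma permAut_mem_Ve {n : ℕ} (σ : Equiv.Perm (Fin n)) {v : Vn n} (hv : v ∈ Ve n) :
    permAut n σ v ∈ Ve n := by
  have h : ∑ i, toAdd v (σ⁻¹ i) = ∑ i, toAdd v i := Equiv.sum_comp σ⁻¹ (toAdd v)
  show ∑ i, toAdd (permAut n σ v) i = 0
  show ∑ i, toAdd v (σ⁻¹ i) = 0
  rw [h]
  exact hv

def permAutVe (n : ℕ) : Equiv.Perm (Fin n) →* MulAut (Ve n) where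
  toFun σ :=
    { toFun := fun v => ⟨permAut n σ (v : Vn n), permAut_mem_Ve σ v.2⟩
      invFun := fun v => ⟨permAut n σ⁻¹ (v : Vn n), permAut_mem_Ve σ⁻¹ v.2⟩
      left_inv := fun v => Subtype.ext <| Multiplicative.toAdd.injective <| funext fun i => by simp
      right_inv := fun v => Subtype.ext <| Multiplicative.toAdd.injective <| funext fun i => by simp
      map_mul' := fun v w => Subtype.ext (map_mul (permAut n σ) (v : Vn n) (w : Vn n)) }
  map_one' := rfl
  map_mul' := fun σ τ => rfl

/-- The Weyl group of `Bₙ` (equivalently `Cₙ`). -/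
abbrev WB (n : ℕ) := Vn n ⋊[permAut n] Equiv.Perm (Fin n)

/-- The Weyl group of `Dₙ`. -/
abbrev WD (n : ℕ) := Ve n ⋊[permAutVe n] Equiv.Perm (Fin n)

/-! Every nontrivial normal subgroup `N` of `W(Bₙ)` contains `z = (1, …, 1) ∈ V` when `n` is even.
Indeed `N` meets `V`: for `g ∈ N` outside `V`, its permutation part moves some `u ∈ V`, and then
the commutator `⁅g, u⁆ = σu - u` is a nonzero vector of `N`. The subgroup `N ∩ V` is
`Sₙ`-invariant, and a nonconstant `v` in it yields `v + (i j)v = eᵢ + eⱼ`, hence every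
`eᵢ + eₖ`; summing over all `k` gives `n eᵢ + z = z`. But in `H₁ × H₂` the nontrivial normal
subgroups `H₁ × 1` and `1 × H₂` intersect trivially, so they cannot both contain `z ≠ 1`. -/

open SemidirectProduct
open scoped commutatorElement

namespace SemidirectProduct

variable {N G : Type*} [CommGroup N] [Group G] {φ : G →* MulAut N}

lemma commutatorElement_inl (g : N ⋊[φ] G) (u : N) :
    ⁅g, (inl u : N ⋊[φ] G)⁆ = inl (φ g.right u * u⁻¹) := by
  ext <;> simp [commutatorElement_def, mul_comm]

theorem exists_inl_mem_of_normal (hφ : Function.Injective φ) {K : Subgroup (N ⋊[φ] G)}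
    (hK : K.Normal) (hne : K ≠ ⊥) : ∃ v ≠ 1, inl v ∈ K := by
  obtain ⟨g, hgK, hg⟩ : ∃ g ∈ K, g ≠ 1 := by
    simpa [Subgroup.eq_bot_iff_forall] using hne
  by_cases hright : g.right = 1
  · refine ⟨g.left, fun h => hg (SemidirectProduct.ext h hright), ?_⟩
    rwa [← inl_left_mul_inr_right g, hright, map_one, mul_one] at hgK
  · obtain ⟨u, hu⟩ : ∃ u, φ g.right u ≠ u := by
      by_contra! h
      exact hright (hφ (MulEquiv.ext h |>.trans (map_one φ).symm))
    refine ⟨φ g.right u * u⁻¹, mul_inv_eq_one.not.mpr hu, ?_⟩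
    rw [← commutatorElement_inl, commutatorElement_def]
    simpa only [mul_assoc] using K.mul_mem hgK (hK.conj_mem _ (K.inv_mem hgK) (inl u))

end SemidirectProduct

theorem isEmpty_mulEquiv_prod_of_forall_normal {G H₁ H₂ : Type*} [Group G] [Group H₁]
    [Group H₂] [Nontrivial H₁] [Nontrivial H₂] {z : G} (hz : z ≠ 1)
    (h : ∀ N : Subgroup G, N.Normal → N ≠ ⊥ → z ∈ N) : IsEmpty (G ≃* H₁ × H₂) := by
  refine ⟨fun e => hz ?_⟩
  obtain ⟨a, ha⟩ := exists_ne (1 : H₁)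
  obtain ⟨b, hb⟩ := exists_ne (1 : H₂)
  have hne : ∀ x, x ≠ 1 → ∀ N : Subgroup G, x ∈ N → N ≠ ⊥ := fun x hx N hxN hbot =>
    hx (by rwa [hbot, Subgroup.mem_bot] at hxN)
  have h₁ := h _ (MonoidHom.normal_ker ((MonoidHom.snd H₁ H₂).comp e.toMonoidHom))
    (hne (e.symm (a, 1)) (by simpa using ha) _ (by simp [Subgroup.mem_prod]))
  have h₂ := h _ (MonoidHom.normal_ker ((MonoidHom.fst H₁ H₂).comp e.toMonoidHom))
    (hne (e.symm (1, b)) (by simpa using hb) _ (by simp [Subgroup.mem_prod]))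
  rw [MonoidHom.mem_ker] at h₁ h₂
  exact e.map_eq_one_iff.mp (Prod.ext h₂ h₁)

abbrev basisVec {n : ℕ} (i : Fin n) : Vn n := ofAdd (Pi.single i 1)

abbrev allOnes (n : ℕ) : Vn n := ofAdd 1

lemma Vn.sq_eq_one {n : ℕ} (v : Vn n) : v ^ 2 = 1 := by
  ext i
  simp [sq, CharTwo.add_self_eq_zero]

lemma Vn.pow_eq_one_of_even {n m : ℕ} (hm : Even m) (v : Vn n) : v ^ m = 1 := by
  obtain ⟨k, rfl⟩ := hm.two_dvd
  rw [pow_mul, Vn.sq_eq_one, one_pow]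

lemma permAut_basisVec {n : ℕ} (σ : Equiv.Perm (Fin n)) (i : Fin n) :
    permAut n σ (basisVec i) = basisVec (σ i) := by
  ext k
  simp [Pi.single_apply, Equiv.eq_symm_apply, eq_comm]

lemma prod_basisVec (n : ℕ) : ∏ i : Fin n, basisVec i = allOnes n := by
  simpa [← ofAdd_sum] using Finset.univ_sum_single (1 : Fin n → ZMod 2)

lemma mul_permAut_swap {n : ℕ} (v : Vn n) {i j : Fin n} (h : toAdd v i ≠ toAdd v j) :
    v * permAut n (Equiv.swap i j) v = basisVec i * basisVec j := by
  have hij : i ≠ j := ne_of_apply_ne (toAdd v) h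
  have h01 : ∀ x y : ZMod 2, x ≠ y → x + y = 1 := by decide
  ext k
  simp only [toAdd_mul, permAut_apply, Equiv.swap_inv, Pi.add_apply, toAdd_ofAdd]
  rcases eq_or_ne k i with rfl | hki
  · simp [hij, h01 _ _ h]
  rcases eq_or_ne k j with rfl | hkj
  · simp [hki, h01 _ _ h, add_comm]
  · simp [Equiv.swap_apply_of_ne_of_ne hki hkj, hki, hkj, CharTwo.add_self_eq_zero]

lemma permAut_injective (n : ℕ) : Function.Injective (permAut n) := by
  intro σ τ h
  refine Equiv.ext fun i => ?_
  have := congrArg (fun f : MulAut (Vn n) => toAdd (f (basisVec i)) (σ i)) h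
  simpa [permAut_basisVec, Pi.single_apply, eq_comm] using this

lemma allOnes_mem_of_permAut_invariant {n : ℕ} (heven : Even n) {K : Subgroup (Vn n)}
    (hK : ∀ σ, ∀ v ∈ K, permAut n σ v ∈ K) {v : Vn n} (hvK : v ∈ K) (hv : v ≠ 1) :
    allOnes n ∈ K := by
  by_cases hconst : ∀ i j, toAdd v i = toAdd v j
  · suffices v = allOnes n by rwa [← this]
    obtain ⟨k, hk⟩ : ∃ k, toAdd v k ≠ 0 := by
      by_contra! h
      exact hv (by ext; simp [h])
    have hunit : ∀ x : ZMod 2, x ≠ 0 → x = 1 := by decide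
    ext i
    simpa [hconst i k] using hunit _ hk
  simp only [not_forall] at hconst
  obtain ⟨i, j, hij⟩ := hconst
  have hpair : basisVec i * basisVec j ∈ K := by
    rw [← mul_permAut_swap v hij]
    exact K.mul_mem hvK (hK _ _ hvK)
  have hpairs : ∀ k, basisVec i * basisVec k ∈ K := by
    intro k
    rcases eq_or_ne i k with rfl | hik
    · rw [← sq, Vn.sq_eq_one]
      exact K.one_mem
    · simpa [permAut_basisVec, Equiv.swap_apply_of_ne_of_ne (ne_of_apply_ne _ hij) hik] using
        hK (Equiv.swap j k) _ hpair
  have := K.prod_mem (t := Finset.univ) fun k _ => hpairs k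
  rwa [Finset.prod_mul_distrib, Finset.prod_const, Finset.card_univ, Fintype.card_fin,
    Vn.pow_eq_one_of_even heven, one_mul, prod_basisVec] at this

lemma inl_allOnes_mem_of_normal {n : ℕ} (heven : Even n) {N : Subgroup (WB n)}
    (hN : N.Normal) (hne : N ≠ ⊥) : inl (allOnes n) ∈ N := by
  obtain ⟨v, hv, hvN⟩ := exists_inl_mem_of_normal (permAut_injective n) hN hne
  refine allOnes_mem_of_permAut_invariant (K := N.comap inl) heven (fun σ w hw => ?_) hvN hv
  rw [Subgroup.mem_comap, inl_aut, map_inv]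
  exact hN.conj_mem _ hw (inr σ)

lemma inl_allOnes_ne_one {n : ℕ} (hn : 0 < n) : inl (allOnes n) ≠ (1 : WB n) := by
  rw [map_ne_one_iff inl inl_injective, Ne, ← toAdd_eq_zero, funext_iff, not_forall]
  exact ⟨⟨0, hn⟩, one_ne_zero⟩

/-- For every even `n ≥ 6`, the Weyl group `W(Bₙ) = V ⋊ Sₙ` cannot be expressed as a
direct product of two nontrivial groups. -/
theorem weylB_not_product (n : ℕ) (hn : 6 ≤ n) (heven : Even n)
    (H₁ H₂ : Type*) [Group H₁] [Group H₂] (h₁ : Nontrivial H₁) (h₂ : Nontrivial H₂) :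
    ¬ Nonempty (WB n ≃* H₁ × H₂) :=
  not_nonempty_iff.mpr <| isEmpty_mulEquiv_prod_of_forall_normal
    (inl_allOnes_ne_one (by omega)) fun _ hN hne => inl_allOnes_mem_of_normal heven hN hne
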